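/- Let n ≥ 2 and 1 ≤ r ≤ n−1 be integers, let V = {1,…,n} and let R ⊆ V with |R| = r. Then for every ranking ρ on the subsets of V, J_n^{(r)}(q) = ∑_f q^{l_ρ(f)}, where the sum is over all maps f : V → V such that f(v) = v for all v ∈ R and for every v ∈ V some iterate f^k(v) lies in R, and where l_ρ(f) = ∑_{i≥1} C(u_i,2) + ∑_{v ∈ V∖R} (w_ρ(f(v)) − 1). -/

import Mathlib

noncomputable section

/-- `[m]_q = 1 + q + ⋯ + q^{m-1}` as a polynomial in `q` (so `[0]_q = 0`). -/
def qNat (m : ℕ) : Polynomial ℚ := ∑ i ∈ Finset.range m, Polynomial.X ^ i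

/-- The polynomials `J_n^{(r)}(q)`: `J_n^{(0)} = δ_{n,0}`, `J_r^{(r)} = 1` for
`r ≥ 1`, and for `n > r ≥ 1` the recurrence
`J_n^{(r)} = ∑_{j=1}^{n−r} [r]_q^j q^{C(j,2)} C(n−r,j) J_{n−r}^{(j)}`.
(For `n < r` we set the unconstrained value `J_n^{(r)} = 0`.) -/
def J (n r : ℕ) : Polynomial ℚ :=
  if hr : r = 0 then (if n = 0 then 1 else 0)
  else if hn : n ≤ r then (if n = r then 1 else 0)
  else
    ∑ j ∈ Finset.Icc 1 (n - r),
      qNat r ^ j * Polynomial.X ^ j.choose 2 * ((n - r).choose j : Polynomial ℚ) * J (n - r) j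
termination_by n
decreasing_by omega


/-- A rooted forest on the vertex set `Fin n` with root set `R`, encoded by the
map `f` sending each non-root to its parent and each root to itself: `f v = v`
for `v ∈ R`, and every vertex reaches `R` under iteration of `f`. -/
def IsForest {n : ℕ} (R : Finset (Fin n)) (f : Fin n → Fin n) : Prop :=
  (∀ v ∈ R, f v = v) ∧ ∀ v, ∃ k, f^[k] v ∈ R

/-- The level `L(v)` of a vertex: the least `k ≥ 0` with `f^[k] v ∈ R`. -/
def level {n : ℕ} (R : Finset (Fin n)) (f : Fin n → Fin n) (v : Fin n) : ℕ :=
  sInf {k | f^[k] v ∈ R}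

/-- `V_i`, the set of vertices at level `i`. -/
def levelSet {n : ℕ} (R : Finset (Fin n)) (f : Fin n → Fin n) (i : ℕ) : Finset (Fin n) :=
  Finset.univ.filter fun v => level R f v = i

/-- A ranking on the subsets of `Fin n`: a bijection `P ≃ {1, …, |P|}` for each
subset `P` (here realized as an equivalence with `Fin P.card`). -/
def Ranking (n : ℕ) : Type :=
  ∀ P : Finset (Fin n), {v // v ∈ P} ≃ Fin P.card

/-- The weight `w_ρ(v) = ρ(V_{L(v)})(v) ∈ {1, …, |V_{L(v)}|}` of a vertex. -/
def weight {n : ℕ} (ρ : Ranking n) (R : Finset (Fin n)) (f : Fin n → Fin n) (v : Fin n) : ℕ :=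
  (ρ (levelSet R f (level R f v))
    ⟨v, Finset.mem_filter.mpr ⟨Finset.mem_univ v, rfl⟩⟩ : Fin _) + 1

/-- The level statistic
`l_ρ(f) = ∑_{i≥1} C(u_i,2) + ∑_{v ∉ R} (w_ρ(f(v)) − 1)` where `u_i = |V_i|`
(the levels of a forest on `n` vertices are `< n`, so the first sum may be
taken over `1 ≤ i ≤ n`). -/
def levelStat {n : ℕ} (ρ : Ranking n) (R : Finset (Fin n)) (f : Fin n → Fin n) : ℕ :=
  (∑ i ∈ Finset.Icc 1 n, ((levelSet R f i).card).choose 2) +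
    ∑ v ∈ Finset.univ \ R, (weight ρ R f (f v) - 1)

/-!
Deleting the roots `R` of a forest `f` leaves a forest on the non-roots whose roots are the
children `S` of `R`; `f` is recovered from that forest and the parent map `S → R`. The level
sets of the smaller forest are those of `f` shifted down by one, so for the induced ranking the
statistic splits as `C(|S|, 2) + ∑_{v ∈ S} (w(f v) - 1) + l(smaller forest)`, and summing
`q^{∑ (w(f v) - 1)}` over all parent maps gives `[r]_q^{|S|}`. Summing over `S` grouped by `|S|`
is then the recurrence defining `J`. The induction runs over arbitrary finite vertex types, with
the sum over levels truncated at `N`; depths never exceed `|V| - |R|`, so `N = n` suffices.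
-/

open Finset Polynomial

theorem Finset.sum_Icc_one_eq_sum_range {M : Type*} [AddCommMonoid M] (h : ℕ → M) (K : ℕ) :
    ∑ i ∈ Icc 1 K, h i = ∑ k ∈ range K, h (k + 1) := by
  rw [← Ico_add_one_right_eq_Icc, sum_Ico_eq_sum_range, Nat.add_sub_cancel]
  simp only [add_comm]

/-- Unlike the defining recurrence, this also holds for `r = 0` and for `m = 0`. -/
theorem J_add_self (m r : ℕ) :
    J (m + r) r =
      ∑ j ∈ range (m + 1), (m.choose j : ℚ[X]) * X ^ j.choose 2 * qNat r ^ j * J m j := by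
  rcases Nat.eq_zero_or_pos r with rfl | hr
  · simp [sum_range_succ', qNat]
  rcases Nat.eq_zero_or_pos m with rfl | hm
  · simp [J]
  have hJ0 : J m 0 = 0 := by rw [J]; simp [hm.ne']
  rw [J, dif_neg hr.ne', dif_neg (by omega), Nat.add_sub_cancel, sum_range_succ', hJ0, mul_zero,
    add_zero, sum_Icc_one_eq_sum_range]
  exact sum_congr rfl fun _ _ => by ring

theorem J_self (r : ℕ) : J r r = 1 := by
  rw [J]
  by_cases h : r = 0 <;> simp [h]

/-! The definitions above, for an arbitrary finite vertex type: the induction passes to the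
subtype of non-roots. On `Fin n` they unfold to the originals. -/

abbrev SubsetRanking (α : Type*) : Type _ :=
  ∀ P : Finset α, {v // v ∈ P} ≃ Fin P.card

def IsRootedForest {α : Type*} (R : Finset α) (f : α → α) : Prop :=
  (∀ v ∈ R, f v = v) ∧ ∀ v, ∃ k, f^[k] v ∈ R

def depth {α : Type*} (R : Finset α) (f : α → α) (v : α) : ℕ :=
  sInf {k | f^[k] v ∈ R}

section Depth

variable {α : Type*} {R : Finset α} {f : α → α} {v : α}

theorem depth_of_mem (hv : v ∈ R) : depth R f v = 0 :=
  Nat.sInf_eq_zero.2 (Or.inl hv)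

theorem depth_apply_add_one (hf : IsRootedForest R f) (hv : v ∉ R) :
    depth R f (f v) + 1 = depth R f v := by
  refine Nat.sInf_add (p := fun k => f^[k] v ∈ R) (Nat.one_le_iff_ne_zero.2 fun h => ?_)
  rcases Nat.sInf_eq_zero.1 h with h0 | hempty
  · exact hv h0
  · obtain ⟨k, hk⟩ := hf.2 v
    exact hempty.subset hk

theorem depth_pos (hf : IsRootedForest R f) (hv : v ∉ R) : 0 < depth R f v := by
  rw [← depth_apply_add_one hf hv]
  exact Nat.succ_pos _

theorem iterate_mem_of_recursion {d : α → ℕ} (h0 : ∀ v ∈ R, d v = 0)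
    (hd : ∀ v ∉ R, d v = d (f v) + 1) :
    ∀ v, f^[d v] v ∈ R ∧ ∀ k < d v, f^[k] v ∉ R := by
  suffices ∀ m v, d v = m → f^[m] v ∈ R ∧ ∀ k < m, f^[k] v ∉ R from
    fun v => this _ v rfl
  intro m
  induction m with
  | zero =>
    refine fun v hv => ⟨?_, fun k hk => absurd hk (Nat.not_lt_zero k)⟩
    by_contra hvR
    have := hd v hvR
    omega
  | succ m ih =>
    intro v hv
    have hvR : v ∉ R := fun h => by simp [h0 v h] at hv
    obtain ⟨hmem, hnot⟩ := ih (f v) (by rw [hd v hvR] at hv; omega)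
    refine ⟨hmem, fun k hk => ?_⟩
    cases k with
    | zero => exact hvR
    | succ k => exact hnot k (by omega)

theorem isRootedForest_of_recursion (hfix : ∀ v ∈ R, f v = v) {d : α → ℕ}
    (h0 : ∀ v ∈ R, d v = 0) (hd : ∀ v ∉ R, d v = d (f v) + 1) : IsRootedForest R f :=
  ⟨hfix, fun v => ⟨d v, (iterate_mem_of_recursion h0 hd v).1⟩⟩

theorem depth_eq_of_recursion {d : α → ℕ} (h0 : ∀ v ∈ R, d v = 0)
    (hd : ∀ v ∉ R, d v = d (f v) + 1) : depth R f = d := by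
  funext v
  obtain ⟨hmem, hnot⟩ := iterate_mem_of_recursion h0 hd v
  exact le_antisymm (Nat.sInf_le hmem)
    (le_csInf ⟨_, hmem⟩ fun k hk => not_lt.1 fun h => hnot k h hk)

end Depth

theorem not_isRootedForest_empty {α : Type*} [Nonempty α] (f : α → α) :
    ¬ IsRootedForest (∅ : Finset α) f := fun hf =>
  let ⟨_, hk⟩ := hf.2 (Classical.arbitrary α)
  notMem_empty _ hk

theorem isRootedForest_univ_iff {α : Type*} [Fintype α] {f : α → α} :
    IsRootedForest univ f ↔ f = id :=
  ⟨fun hf => funext fun v => hf.1 v (mem_univ v),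
    fun hf => hf ▸ ⟨fun _ _ => rfl, fun v => ⟨0, mem_univ v⟩⟩⟩

namespace SubsetRanking

variable {α : Type*} (ρ : SubsetRanking α)

theorem sum_X_pow_rank (P : Finset α) :
    ∑ u : P, (X : ℚ[X]) ^ (ρ P u : ℕ) = qNat P.card := by
  rw [Equiv.sum_comp (ρ P) (fun i : Fin P.card => (X : ℚ[X]) ^ (i : ℕ)),
    Fin.sum_univ_eq_sum_range (fun i => (X : ℚ[X]) ^ i), qNat]

theorem sum_X_pow_sum_rank {β : Type*} [DecidableEq β] (P : Finset α) (S : Finset β) :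
    ∑ p : S → P, (X : ℚ[X]) ^ ∑ v, (ρ P (p v) : ℕ) = qNat P.card ^ S.card := by
  simp_rw [← prod_pow_eq_pow_sum]
  rw [← Fintype.prod_sum fun (_ : S) (u : P) => (X : ℚ[X]) ^ (ρ P u : ℕ), ρ.sum_X_pow_rank,
    prod_const, card_univ, Fintype.card_coe]

def subtype (p : α → Prop) : SubsetRanking (Subtype p) := fun P =>
  ((P.equivMap (Function.Embedding.subtype p)).trans (ρ _)).trans (finCongr (card_map _))

variable [DecidableEq α]

/-- `ρ P` as a plain function on `α` (zero off `P`), so that `P` can be rewritten without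
transporting membership proofs. -/
def rankOf (P : Finset α) (v : α) : ℕ :=
  if h : v ∈ P then ρ P ⟨v, h⟩ else 0

theorem rankOf_of_mem {P : Finset α} {v : α} (h : v ∈ P) : ρ.rankOf P v = ρ P ⟨v, h⟩ :=
  dif_pos h

theorem rankOf_subtype (p : α → Prop) (P : Finset (Subtype p)) (v : Subtype p) :
    (ρ.subtype p).rankOf P v = ρ.rankOf (P.map (Function.Embedding.subtype p)) v := by
  by_cases hv : v ∈ P
  · have hv' : (v : α) ∈ P.map (Function.Embedding.subtype p) := mem_map_of_mem _ hv
    rw [rankOf_of_mem _ hv, rankOf_of_mem _ hv']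
    rfl
  · have : (v : α) ∉ P.map (Function.Embedding.subtype p) := by simp [hv]
    rw [rankOf, rankOf, dif_neg hv, dif_neg this]

end SubsetRanking

section Layers

variable {α : Type*} [Fintype α]

def depthLayer (R : Finset α) (f : α → α) (i : ℕ) : Finset α :=
  univ.filter fun v => depth R f v = i

def depthWeight (ρ : SubsetRanking α) (R : Finset α) (f : α → α) (v : α) : ℕ :=
  (ρ (depthLayer R f (depth R f v)) ⟨v, mem_filter.mpr ⟨mem_univ v, rfl⟩⟩ : Fin _) + 1

def depthStat [DecidableEq α] (N : ℕ) (ρ : SubsetRanking α) (R : Finset α)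
    (f : α → α) : ℕ :=
  (∑ i ∈ Icc 1 N, ((depthLayer R f i).card).choose 2) +
    ∑ v ∈ univ \ R, (depthWeight ρ R f (f v) - 1)

variable {R : Finset α} {f : α → α}

@[simp]
theorem mem_depthLayer {v : α} {i : ℕ} : v ∈ depthLayer R f i ↔ depth R f v = i := by
  simp [depthLayer]

theorem depthLayer_zero (hf : IsRootedForest R f) : depthLayer R f 0 = R := by
  ext v
  rw [mem_depthLayer]
  refine ⟨fun h => ?_, depth_of_mem⟩
  by_contra hv
  exact (depth_pos hf hv).ne' h

theorem depthWeight_eq_rankOf_add_one [DecidableEq α] (ρ : SubsetRanking α) (v : α) :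
    depthWeight ρ R f v = ρ.rankOf (depthLayer R f (depth R f v)) v + 1 := by
  rw [depthWeight, SubsetRanking.rankOf_of_mem _ (mem_depthLayer.2 rfl)]

end Layers

open scoped Classical in
def rootedForests {α : Type*} [Fintype α] [DecidableEq α] (R : Finset α) :
    Finset (α → α) :=
  univ.filter (IsRootedForest R)

section Pruning

variable {α : Type*} [DecidableEq α] {R : Finset α} {f : α → α}

def deleteRoots (R : Finset α) (f : α → α) (v : {v // v ∉ R}) : {v // v ∉ R} :=
  if h : f v ∈ R then v else ⟨f v, h⟩

def rootChildren [Fintype α] (R : Finset α) (f : α → α) : Finset {v // v ∉ R} :=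
  univ.filter fun v => f v ∈ R

theorem deleteRoots_of_apply_mem {v : {v // v ∉ R}} (h : f v ∈ R) : deleteRoots R f v = v :=
  dif_pos h

theorem coe_deleteRoots_of_apply_notMem {v : {v // v ∉ R}} (h : f v ∉ R) :
    (deleteRoots R f v : α) = f v := by
  rw [deleteRoots, dif_neg h]

variable [Fintype α]

@[simp]
theorem mem_rootChildren {v : {v // v ∉ R}} : v ∈ rootChildren R f ↔ f v ∈ R := by
  simp [rootChildren]

theorem isRootedForest_deleteRoots_and_depth (hf : IsRootedForest R f) :
    IsRootedForest (rootChildren R f) (deleteRoots R f) ∧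
      depth (rootChildren R f) (deleteRoots R f) = fun v : {v // v ∉ R} => depth R f v - 1 := by
  have h0 : ∀ v ∈ rootChildren R f, depth R f v - 1 = 0 := fun v hv => by
    rw [← depth_apply_add_one hf v.2, depth_of_mem (mem_rootChildren.1 hv)]
  have hd : ∀ v ∉ rootChildren R f,
      depth R f v - 1 = depth R f (deleteRoots R f v) - 1 + 1 := fun v hv => by
    rw [mem_rootChildren] at hv
    rw [coe_deleteRoots_of_apply_notMem hv, ← depth_apply_add_one hf v.2,
      Nat.sub_add_cancel (depth_pos hf hv)]
    rfl
  exact ⟨isRootedForest_of_recursion (fun v hv => deleteRoots_of_apply_mem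
    (mem_rootChildren.1 hv)) h0 hd, depth_eq_of_recursion h0 hd⟩

theorem isRootedForest_deleteRoots (hf : IsRootedForest R f) :
    IsRootedForest (rootChildren R f) (deleteRoots R f) :=
  (isRootedForest_deleteRoots_and_depth hf).1

theorem depth_deleteRoots_add_one (hf : IsRootedForest R f) (v : {v // v ∉ R}) :
    depth (rootChildren R f) (deleteRoots R f) v + 1 = depth R f v := by
  rw [(isRootedForest_deleteRoots_and_depth hf).2, Nat.sub_add_cancel (depth_pos hf v.2)]

theorem map_depthLayer_deleteRoots (hf : IsRootedForest R f) (i : ℕ) :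
    (depthLayer (rootChildren R f) (deleteRoots R f) i).map (Function.Embedding.subtype _) =
      depthLayer R f (i + 1) := by
  ext v
  simp only [mem_map, mem_depthLayer, Function.Embedding.coe_subtype]
  constructor
  · rintro ⟨w, hw, rfl⟩
    rw [← depth_deleteRoots_add_one hf, hw]
  · intro hv
    have hvR : v ∉ R := fun h => by simp [depth_of_mem h] at hv
    refine ⟨⟨v, hvR⟩, ?_, rfl⟩
    have : _ + 1 = depth R f v := depth_deleteRoots_add_one hf ⟨v, hvR⟩
    omega

end Pruning

section Grafting

variable {α : Type*} [DecidableEq α] {R : Finset α} {S : Finset {v // v ∉ R}}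

def addRoots (p : S → R) (g : {v // v ∉ R} → {v // v ∉ R}) (v : α) : α :=
  if hR : v ∈ R then v
  else if hS : ⟨v, hR⟩ ∈ S then p ⟨⟨v, hR⟩, hS⟩
  else g ⟨v, hR⟩

variable {p : S → R} {g : {v // v ∉ R} → {v // v ∉ R}}

theorem addRoots_of_mem {v : α} (hv : v ∈ R) : addRoots p g v = v :=
  dif_pos hv

theorem addRoots_coe_of_mem (v : S) : addRoots p g v = p v := by
  simp [addRoots, v.1.2, v.2]

theorem addRoots_coe_of_notMem {v : {v // v ∉ R}} (hv : v ∉ S) : addRoots p g v = g v := by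
  simp [addRoots, v.2, hv]

theorem isRootedForest_addRoots (hg : IsRootedForest S g) : IsRootedForest R (addRoots p g) := by
  refine isRootedForest_of_recursion (fun v hv => addRoots_of_mem hv)
    (d := fun v => if hv : v ∈ R then 0 else depth S g ⟨v, hv⟩ + 1) (fun v hv => dif_pos hv)
    fun v hvR => ?_
  by_cases hvS : ⟨v, hvR⟩ ∈ S
  · simp [addRoots_coe_of_mem (⟨⟨v, hvR⟩, hvS⟩ : S), hvR, depth_of_mem hvS]
  · simp [addRoots_coe_of_notMem hvS, hvR, (g ⟨v, hvR⟩).2, ← depth_apply_add_one hg hvS]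

theorem deleteRoots_addRoots (hg : IsRootedForest S g) : deleteRoots R (addRoots p g) = g := by
  funext v
  by_cases hv : v ∈ S
  · rw [hg.1 v hv, deleteRoots_of_apply_mem]
    simp [addRoots_coe_of_mem (⟨v, hv⟩ : S), (p ⟨v, hv⟩).2]
  · apply Subtype.ext
    rw [coe_deleteRoots_of_apply_notMem, addRoots_coe_of_notMem hv]
    simp [addRoots_coe_of_notMem hv, (g v).2]

variable [Fintype α]

theorem rootChildren_addRoots : rootChildren R (addRoots p g) = S := by
  ext v
  rw [mem_rootChildren]
  by_cases hv : v ∈ S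
  · simp [hv, addRoots_coe_of_mem (⟨v, hv⟩ : S), (p ⟨v, hv⟩).2]
  · simp [hv, addRoots_coe_of_notMem hv, (g v).2]

theorem addRoots_deleteRoots {f : α → α} (hf : ∀ v ∈ R, f v = v) :
    addRoots (fun v : rootChildren R f => ⟨f v, mem_rootChildren.1 v.2⟩) (deleteRoots R f) =
      f := by
  funext v
  by_cases hvR : v ∈ R
  · rw [addRoots_of_mem hvR, hf v hvR]
  by_cases hv : ⟨v, hvR⟩ ∈ rootChildren R f
  · exact addRoots_coe_of_mem (⟨⟨v, hvR⟩, hv⟩ : rootChildren R f)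
  · rw [show v = ((⟨v, hvR⟩ : {v // v ∉ R}) : α) from rfl, addRoots_coe_of_notMem hv,
      coe_deleteRoots_of_apply_notMem (mem_rootChildren.not.1 hv)]

end Grafting

section Statistic

variable {α : Type*} [Fintype α] [DecidableEq α] {R : Finset α} {f : α → α}

theorem sum_choose_card_depthLayer_succ (hf : IsRootedForest R f) (N : ℕ) :
    ∑ i ∈ Icc 1 (N + 1), (depthLayer R f i).card.choose 2 =
      (rootChildren R f).card.choose 2 +
        ∑ i ∈ Icc 1 N, (depthLayer (rootChildren R f) (deleteRoots R f) i).card.choose 2 := by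
  have hcard : ∀ i, (depthLayer R f (i + 1)).card =
      (depthLayer (rootChildren R f) (deleteRoots R f) i).card := fun i => by
    rw [← map_depthLayer_deleteRoots hf, card_map]
  rw [sum_Icc_one_eq_sum_range, sum_Icc_one_eq_sum_range, sum_range_succ', hcard 0,
    depthLayer_zero (isRootedForest_deleteRoots hf), add_comm]
  simp only [hcard]

theorem depthWeight_of_mem (hf : IsRootedForest R f) (ρ : SubsetRanking α) {v : α}
    (hv : v ∈ R) :
    depthWeight ρ R f v = ρ.rankOf R v + 1 := by
  rw [depthWeight_eq_rankOf_add_one, depth_of_mem hv, depthLayer_zero hf]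

theorem depthWeight_deleteRoots (hf : IsRootedForest R f) (ρ : SubsetRanking α)
    {v : {v // v ∉ R}} (hv : v ∉ rootChildren R f) :
    depthWeight (ρ.subtype (· ∉ R)) (rootChildren R f) (deleteRoots R f) (deleteRoots R f v) =
      depthWeight ρ R f (f v) := by
  rw [depthWeight_eq_rankOf_add_one, depthWeight_eq_rankOf_add_one,
    SubsetRanking.rankOf_subtype, map_depthLayer_deleteRoots hf, depth_deleteRoots_add_one hf,
    coe_deleteRoots_of_apply_notMem (mem_rootChildren.not.1 hv)]

theorem sum_depthWeight_sub_one (hf : IsRootedForest R f) (ρ : SubsetRanking α) :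
    ∑ v ∈ univ \ R, (depthWeight ρ R f (f v) - 1) =
      ∑ v ∈ rootChildren R f, ρ.rankOf R (f v) +
        ∑ v ∈ univ \ rootChildren R f, (depthWeight (ρ.subtype (· ∉ R)) (rootChildren R f)
          (deleteRoots R f) (deleteRoots R f v) - 1) := by
  rw [sum_subtype (p := (· ∉ R)) _ (by simp), ← sum_sdiff (subset_univ (rootChildren R f)),
    add_comm]
  congr 1
  · refine sum_congr rfl fun v hv => ?_
    rw [depthWeight_of_mem hf ρ (mem_rootChildren.1 hv), Nat.add_sub_cancel]
  · refine sum_congr rfl fun v hv => ?_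
    rw [depthWeight_deleteRoots hf ρ (mem_sdiff.1 hv).2]

theorem depthStat_succ (hf : IsRootedForest R f) (N : ℕ) (ρ : SubsetRanking α) :
    depthStat (N + 1) ρ R f = (rootChildren R f).card.choose 2 +
      ∑ v ∈ rootChildren R f, ρ.rankOf R (f v) +
        depthStat N (ρ.subtype (· ∉ R)) (rootChildren R f) (deleteRoots R f) := by
  rw [depthStat, depthStat, sum_choose_card_depthLayer_succ hf, sum_depthWeight_sub_one hf]
  ring

end Statistic

section Counting

variable {α : Type*} [Fintype α] [DecidableEq α] {R : Finset α}

@[simp]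
theorem mem_rootedForests {f : α → α} : f ∈ rootedForests R ↔ IsRootedForest R f := by
  simp [rootedForests]

theorem depthStat_succ_addRoots {S : Finset {v // v ∉ R}} {g : {v // v ∉ R} → {v // v ∉ R}}
    (hg : IsRootedForest S g) (N : ℕ) (ρ : SubsetRanking α) (p : S → R) :
    depthStat (N + 1) ρ R (addRoots p g) =
      S.card.choose 2 + ∑ v : S, (ρ R (p v) : ℕ) +
        depthStat N (ρ.subtype (· ∉ R)) S g := by
  rw [depthStat_succ (isRootedForest_addRoots hg), rootChildren_addRoots,
    deleteRoots_addRoots hg, ← sum_coe_sort S]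
  congr 2
  refine sum_congr rfl fun v _ => ?_
  rw [addRoots_coe_of_mem, SubsetRanking.rankOf_of_mem _ (p v).2]

/-- Forests with roots `R` and root children `S` correspond, via `addRoots`, to forests with
roots `S` on the non-roots together with a parent map `S → R`. -/
theorem sum_rootedForests_filter_rootChildren (N : ℕ) (ρ : SubsetRanking α)
    (S : Finset {v // v ∉ R}) :
    ∑ f ∈ rootedForests R with rootChildren R f = S, (X : ℚ[X]) ^ depthStat (N + 1) ρ R f =
      X ^ S.card.choose 2 * qNat R.card ^ S.card *
        ∑ g ∈ rootedForests S, X ^ depthStat N (ρ.subtype (· ∉ R)) S g := by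
  have hbij : ∑ pg ∈ (univ : Finset (S → R)) ×ˢ rootedForests S,
      (X : ℚ[X]) ^ depthStat (N + 1) ρ R (addRoots pg.1 pg.2) =
        ∑ f ∈ rootedForests R with rootChildren R f = S, X ^ depthStat (N + 1) ρ R f := by
    refine sum_bij' (fun pg _ => addRoots pg.1 pg.2)
      (fun f hf => (fun v => ⟨f v, mem_rootChildren.1 ((mem_filter.1 hf).2 ▸ v.2)⟩,
        deleteRoots R f)) (fun pg hpg => ?_) (fun f hf => ?_) (fun pg hpg => ?_)
      (fun f hf => ?_) fun _ _ => rfl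
    · simp only [mem_product, mem_rootedForests] at hpg
      exact mem_filter.2 ⟨mem_rootedForests.2 (isRootedForest_addRoots hpg.2),
        rootChildren_addRoots⟩
    · obtain ⟨hforest, rfl⟩ := mem_filter.1 hf
      exact mem_product.2 ⟨mem_univ _,
        mem_rootedForests.2 (isRootedForest_deleteRoots (mem_rootedForests.1 hforest))⟩
    · simp only [mem_product, mem_rootedForests] at hpg
      refine Prod.ext (funext fun v => Subtype.ext (addRoots_coe_of_mem v)) ?_
      exact deleteRoots_addRoots hpg.2
    · obtain ⟨hforest, rfl⟩ := mem_filter.1 hf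
      exact addRoots_deleteRoots (mem_rootedForests.1 hforest).1
  rw [← hbij, sum_product, ← ρ.sum_X_pow_sum_rank, mul_assoc, sum_mul_sum, mul_sum]
  refine sum_congr rfl fun p _ => ?_
  rw [mul_sum]
  refine sum_congr rfl fun g hg => ?_
  rw [depthStat_succ_addRoots (mem_rootedForests.1 hg), pow_add, pow_add, mul_assoc]

end Counting

theorem J_card_eq_sum_rootedForests (N : ℕ) {α : Type*} [Fintype α] [DecidableEq α]
    (R : Finset α) (ρ : SubsetRanking α) (hN : Fintype.card α ≤ N + R.card) :
    J (Fintype.card α) R.card = ∑ f ∈ rootedForests R, (X : ℚ[X]) ^ depthStat N ρ R f := by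
  induction N generalizing α with
  | zero =>
    obtain rfl : R = univ := eq_univ_of_card R (le_antisymm (card_le_univ R) (by omega))
    have : rootedForests (univ : Finset α) = {id} := by ext f; simp [isRootedForest_univ_iff]
    simp [this, depthStat, card_univ, J_self]
  | succ N ih =>
    have hm : Fintype.card {v // v ∉ R} + R.card = Fintype.card α := by
      rw [Fintype.card_subtype_compl, Fintype.card_coe]
      have := card_le_univ R
      omega
    set m := Fintype.card {v // v ∉ R}
    -- Only `S = ∅` can escape the induction hypothesis; then the non-roots carry no forest and
    -- `J m 0 = 0` for `m > 0`.
    have hforests : ∀ S : Finset {v // v ∉ R},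
        ∑ g ∈ rootedForests S, X ^ depthStat N (ρ.subtype (· ∉ R)) S g = J m S.card := by
      intro S
      by_cases hS : m ≤ N + S.card
      · exact (ih S _ hS).symm
      obtain rfl : S = ∅ := card_eq_zero.1 (by omega)
      have : Nonempty {v // v ∉ R} := Fintype.card_pos_iff.1 (by omega)
      have : rootedForests (∅ : Finset {v // v ∉ R}) = ∅ := by
        ext g
        simp [not_isRootedForest_empty]
      rw [this, sum_empty, card_empty, J, dif_pos rfl, if_neg (by omega)]
    calc J (Fintype.card α) R.card
        = ∑ j ∈ range (m + 1),
            m.choose j • ((X : ℚ[X]) ^ j.choose 2 * qNat R.card ^ j * J m j) := by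
          rw [← hm, J_add_self]
          simp only [nsmul_eq_mul, mul_assoc]
      _ = ∑ S : Finset {v // v ∉ R},
            X ^ S.card.choose 2 * qNat R.card ^ S.card * J m S.card := by
          rw [← powerset_univ, sum_powerset_apply_card fun j =>
            (X : ℚ[X]) ^ j.choose 2 * qNat R.card ^ j * J m j, card_univ]
      _ = ∑ S : Finset {v // v ∉ R},
            ∑ f ∈ rootedForests R with rootChildren R f = S, X ^ depthStat (N + 1) ρ R f := by
          simp only [sum_rootedForests_filter_rootChildren, hforests]
      _ = ∑ f ∈ rootedForests R, X ^ depthStat (N + 1) ρ R f := sum_fiberwise _ _ _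

open scoped Classical in
theorem J_eq_sum_forests_general (n r : ℕ)
    (R : Finset (Fin n)) (hR : R.card = r) (ρ : Ranking n) :
    J n r =
      ∑ f ∈ Finset.univ.filter (fun f : Fin n → Fin n => IsForest R f),
        Polynomial.X ^ levelStat ρ R f := by
  subst hR
  have h := J_card_eq_sum_rootedForests n R ρ (by simp)
  rw [Fintype.card_fin] at h
  exact h

open scoped Classical in
/-- for `n ≥ 2`, `1 ≤ r ≤ n − 1`, `R ⊆ {1,…,n}` with `|R| = r`,
and any ranking `ρ`, `J_n^{(r)}(q) = ∑_F q^{l_ρ(F)}`, the sum being over all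
rooted forests on `{1, …, n}` with root set `R`. -/
theorem J_eq_sum_forests (n r : ℕ) (hn : 2 ≤ n) (hr : 1 ≤ r) (hrn : r + 1 ≤ n)
    (R : Finset (Fin n)) (hR : R.card = r) (ρ : Ranking n) :
    J n r =
      ∑ f ∈ Finset.univ.filter (fun f : Fin n → Fin n => IsForest R f),
        Polynomial.X ^ levelStat ρ R f :=
  J_eq_sum_forests_general n r R hR ρ

end
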